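/- arXiv:cs/0602007 — 5 statements merged into one kernel-verified Lean document; each statement's English description precedes it below -/
import Mathlib

section
/- Let A, B, C be jointly distributed random variables taking values in finite sets. If B takes at most 2^λ possible values, then H̃∞(A | (B, C)) ≥ H̃∞((A,B) | C) − λ ≥ H̃∞(A | C) − λ. In particular (taking C constant), H̃∞(A | B) ≥ H∞((A, B)) − λ ≥ H∞(A) − λ. -/
open Finset

/-- A probability distribution on a finite type. -/
def IsDist {α : Type*} [Fintype α] (p : α → ℝ) : Prop :=
  (∀ a, 0 ≤ p a) ∧ ∑ a, p a = 1

/-- Min-entropy `H∞` of a distribution on a finite type. -/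
noncomputable def minEntropy {α : Type*} [Fintype α] (p : α → ℝ) : ℝ :=
  - Real.logb 2 (⨆ a, p a)

/-- Average min-entropy `H̃∞(A | B)` of the first component given the second,
for a joint distribution `p` on `α × β`. -/
noncomputable def avgMinEntropy {α β : Type*} [Fintype α] [Fintype β] (p : α × β → ℝ) : ℝ :=
  - Real.logb 2 (∑ b, ⨆ a, p (a, b))

private lemma logb_step (lam x y : ℝ) (hx : 0 < x) (h : x ≤ 2 ^ lam * y) :
    -Real.logb 2 y - lam ≤ -Real.logb 2 x := by
  have h2 : (0:ℝ) < 2 ^ lam := Real.rpow_pos_of_pos two_pos lam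
  have hy : 0 < y := by nlinarith
  have hle : Real.logb 2 x ≤ Real.logb 2 (2 ^ lam * y) :=
    Real.logb_le_logb_of_le one_lt_two hx h
  rw [Real.logb_mul (ne_of_gt h2) (ne_of_gt hy),
    Real.logb_rpow (by norm_num) (by norm_num)] at hle
  linarith

private lemma bdd {ι : Type*} [Finite ι] (f : ι → ℝ) : BddAbove (Set.range f) :=
  (Set.finite_range f).bddAbove

private lemma neg_logb_le (x y : ℝ) (hx : 0 < x) (h : x ≤ y) :
    -Real.logb 2 y ≤ -Real.logb 2 x :=
  neg_le_neg (Real.logb_le_logb_of_le one_lt_two hx h)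

/-- If `B` takes at most `2^λ` values, then
`H̃∞(A | (B,C)) ≥ H̃∞((A,B) | C) − λ ≥ H̃∞(A | C) − λ`, and in particular (taking `C`
constant) `H̃∞(A | B) ≥ H∞((A,B)) − λ ≥ H∞(A) − λ`.
Here `p` is the joint distribution of `(A, B, C)` on `α × β × γ`. -/
theorem avgMinEntropy_chain_rule {α β γ : Type*} [Fintype α] [Fintype β] [Fintype γ]
    (p : α × β × γ → ℝ) (hp : IsDist p) (lam : ℝ)
    (hcard : (Fintype.card β : ℝ) ≤ 2 ^ lam) :
    (avgMinEntropy (fun x : (α × β) × γ => p (x.1.1, x.1.2, x.2)) - lam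
        ≤ avgMinEntropy p) ∧
    (avgMinEntropy (fun x : α × γ => ∑ b, p (x.1, b, x.2)) - lam
        ≤ avgMinEntropy (fun x : (α × β) × γ => p (x.1.1, x.1.2, x.2)) - lam) ∧
    (minEntropy (fun x : α × β => ∑ c, p (x.1, x.2, c)) - lam
        ≤ avgMinEntropy (fun x : α × β => ∑ c, p (x.1, x.2, c))) ∧
    (minEntropy (fun a : α => ∑ bc : β × γ, p (a, bc)) - lam
        ≤ minEntropy (fun x : α × β => ∑ c, p (x.1, x.2, c)) - lam) := by
  obtain ⟨hnn, hsum⟩ := hp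
  have h2 : (0:ℝ) < 2 ^ lam := Real.rpow_pos_of_pos two_pos lam
  -- a positive point
  have hex : ∃ x : α × β × γ, 0 < p x := by
    by_contra h
    push_neg at h
    have : ∑ x : α × β × γ, p x = 0 :=
      le_antisymm (Finset.sum_nonpos fun x _ => h x) (Finset.sum_nonneg fun x _ => hnn x)
    rw [hsum] at this; norm_num at this
  obtain ⟨⟨a0, b0, c0⟩, hx0⟩ := hex
  haveI : Nonempty α := ⟨a0⟩
  haveI : Nonempty β := ⟨b0⟩
  haveI : Nonempty γ := ⟨c0⟩
  -- key sums
  set S := ∑ bc : β × γ, ⨆ a, p (a, bc) with hSdef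
  set T := ∑ c : γ, ⨆ ab : α × β, p (ab.1, ab.2, c) with hTdef
  set U := ∑ c : γ, ⨆ a : α, ∑ b, p (a, b, c) with hUdef
  set V := ∑ b : β, ⨆ a : α, ∑ c, p (a, b, c) with hVdef
  set M := ⨆ ab : α × β, ∑ c, p (ab.1, ab.2, c) with hMdef
  set N := ⨆ a : α, ∑ bc : β × γ, p (a, bc) with hNdef
  have supnn : ∀ (c : γ), (0:ℝ) ≤ ⨆ ab : α × β, p (ab.1, ab.2, c) := fun c =>
    le_trans (hnn (a0, b0, c)) (le_ciSup (f := fun ab : α × β => p (ab.1, ab.2, c)) (bdd _) (a0, b0))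
  have hT : 0 < T := by
    refine Finset.sum_pos' (fun c _ => supnn c) ⟨c0, Finset.mem_univ _, ?_⟩
    exact lt_of_lt_of_le hx0 (le_ciSup (f := fun ab : α × β => p (ab.1, ab.2, c0)) (bdd _) (a0, b0))
  have hS : 0 < S := by
    refine Finset.sum_pos' (fun bc _ => le_trans (hnn (a0, bc)) (le_ciSup (f := fun a : α => p (a, bc)) (bdd _) a0))
      ⟨(b0, c0), Finset.mem_univ _, ?_⟩
    exact lt_of_lt_of_le hx0 (le_ciSup (f := fun a : α => p (a, (b0, c0))) (bdd _) a0)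
  have hM : 0 < M := by
    have h1 : p (a0, b0, c0) ≤ ∑ c, p (a0, b0, c) :=
      Finset.single_le_sum (fun c _ => hnn (a0, b0, c)) (Finset.mem_univ c0)
    exact lt_of_lt_of_le hx0 (h1.trans (le_ciSup (f := fun ab : α × β => ∑ c, p (ab.1, ab.2, c)) (bdd _) (a0, b0)))
  have hV : 0 < V := by
    refine Finset.sum_pos' (fun b _ => ?_) ⟨b0, Finset.mem_univ _, ?_⟩
    · exact le_trans (Finset.sum_nonneg fun c _ => hnn (a0, b, c)) (le_ciSup (f := fun a : α => ∑ c, p (a, b, c)) (bdd _) a0)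
    · have h1 : p (a0, b0, c0) ≤ ∑ c, p (a0, b0, c) :=
        Finset.single_le_sum (fun c _ => hnn (a0, b0, c)) (Finset.mem_univ c0)
      exact lt_of_lt_of_le hx0 (h1.trans (le_ciSup (f := fun a : α => ∑ c, p (a, b0, c)) (bdd _) a0))
  -- S ≤ 2^lam * T
  have hST : S ≤ 2 ^ lam * T := by
    have : S = ∑ c : γ, ∑ b : β, ⨆ a, p (a, b, c) := by
      rw [hSdef, Fintype.sum_prod_type]; exact Finset.sum_comm
    rw [this, hTdef, Finset.mul_sum]
    refine Finset.sum_le_sum fun c _ => ?_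
    calc ∑ b : β, ⨆ a, p (a, b, c)
        ≤ ∑ _b : β, ⨆ ab : α × β, p (ab.1, ab.2, c) :=
          Finset.sum_le_sum fun b _ => ciSup_le fun a => le_ciSup (f := fun ab : α × β => p (ab.1, ab.2, c)) (bdd _) (a, b)
      _ = (Fintype.card β : ℝ) * ⨆ ab : α × β, p (ab.1, ab.2, c) := by
          rw [Finset.sum_const, Finset.card_univ, nsmul_eq_mul]
      _ ≤ 2 ^ lam * ⨆ ab : α × β, p (ab.1, ab.2, c) :=
          mul_le_mul_of_nonneg_right hcard (supnn c)
  -- T ≤ U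
  have hTU : T ≤ U := by
    refine Finset.sum_le_sum fun c _ => ciSup_le fun ab => ?_
    have h1 : p (ab.1, ab.2, c) ≤ ∑ b, p (ab.1, b, c) :=
      Finset.single_le_sum (fun b _ => hnn (ab.1, b, c)) (Finset.mem_univ ab.2)
    exact h1.trans (le_ciSup (f := fun a : α => ∑ b, p (a, b, c)) (bdd _) ab.1)
  -- V ≤ 2^lam * M
  have hVM : V ≤ 2 ^ lam * M := by
    calc V ≤ ∑ _b : β, M :=
          Finset.sum_le_sum fun b _ => ciSup_le fun a => le_ciSup (f := fun ab : α × β => ∑ c, p (ab.1, ab.2, c)) (bdd _) (a, b)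
      _ = (Fintype.card β : ℝ) * M := by
          rw [Finset.sum_const, Finset.card_univ, nsmul_eq_mul]
      _ ≤ 2 ^ lam * M := mul_le_mul_of_nonneg_right hcard hM.le
  -- M ≤ N
  have hMN : M ≤ N := by
    refine ciSup_le fun ab => ?_
    have h1 : ∑ c, p (ab.1, ab.2, c) ≤ ∑ bc : β × γ, p (ab.1, bc) := by
      rw [Fintype.sum_prod_type]
      exact Finset.single_le_sum
        (fun b _ => Finset.sum_nonneg fun c _ => hnn (ab.1, b, c)) (Finset.mem_univ ab.2)
    exact h1.trans (le_ciSup (f := fun a : α => ∑ bc : β × γ, p (a, bc)) (bdd _) ab.1)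
  refine ⟨?_, ?_, ?_, ?_⟩
  · exact logb_step lam S T hS hST
  · exact sub_le_sub_right (neg_logb_le T U hT hTU) lam
  · exact logb_step lam V M hV hVM
  · exact sub_le_sub_right (neg_logb_le M N hM hMN) lam
end

section
/- Fuzzy extractors from secure sketches: assume (SS, Rec) is an (M, m, m̃, t)-secure sketch on a finite metric space M whose elements are represented by n-bit strings, and let Ext: {0,1}^n × {0,1}^r → {0,1}^ℓ be an average-case (n, m̃, ℓ, ε)-strong extractor. Define Gen(w; r, x) = (R, P) with R = Ext(w; x) and P = (SS(w; r), x), and Rep(w', (s, x)) = Ext(Rec(w', s); x), where x is a uniformly random seed. Then (Gen, Rep) is an (M, m, ℓ, t, ε)-fuzzy extractor. -/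
open Finset

/-- Statistical distance between two distributions on the same finite type. -/
noncomputable def statDist {V : Type*} [Fintype V] (p q : V → ℝ) : ℝ :=
  (∑ v, |p v - q v|) / 2

/-- Distribution of `(Ext(W; X), X, I)` for a joint distribution `p` of `(W, I)`. -/
noncomputable def extDistI {A X O ι : Type*} [Fintype A] [Fintype X] [Fintype O] [Fintype ι]
    [DecidableEq O] (Ext : A → X → O) (p : A × ι → ℝ) : O × X × ι → ℝ :=
  fun x => (∑ a, if Ext a x.2.1 = x.1 then p (a, x.2.2) else 0) / (Fintype.card X : ℝ)

/-- Distribution of `(U_ℓ, X, I)` for a joint distribution `p` of `(W, I)`. -/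
noncomputable def extUniI {A X O ι : Type*} [Fintype A] [Fintype X] [Fintype O] [Fintype ι]
    (p : A × ι → ℝ) : O × X × ι → ℝ :=
  fun x => (∑ a, p (a, x.2.2)) / ((Fintype.card O : ℝ) * (Fintype.card X : ℝ))

/-- Distribution of `(R, P) = Gen(W)` where `Gen` uses uniform coins from `C`. -/
noncomputable def genDist {M C O P : Type*} [Fintype M] [Fintype C] [Fintype O] [Fintype P]
    [DecidableEq O] [DecidableEq P]
    (Gen : M → C → O × P) (pW : M → ℝ) : O × P → ℝ :=
  fun yp => (∑ wc : M × C, if Gen wc.1 wc.2 = yp then pW wc.1 else 0) / (Fintype.card C : ℝ)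

/-- Distribution of `(U_ℓ, P)` where `P` is the helper string produced by `Gen(W)`. -/
noncomputable def genUni {M C O P : Type*} [Fintype M] [Fintype C] [Fintype O] [Fintype P]
    [DecidableEq O] [DecidableEq P]
    (Gen : M → C → O × P) (pW : M → ℝ) : O × P → ℝ :=
  fun yp => (∑ y : O, genDist Gen pW (y, yp.2)) / (Fintype.card O : ℝ)

/-- Fuzzy extractors from secure sketches: if `(SS, Rec)` is an
`(M, m, m̃, t)`-secure sketch on a metric space whose points are represented by `n`-bit
strings (via the injection `rep`), and `Ext` is an average-case `(n, m̃, ℓ, ε)`-strong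
extractor, then `Gen(w; r, x) = (Ext(rep w; x), (SS(w; r), x))` and
`Rep(w', (s, x)) = Ext(rep (Rec(w', s)); x)` form an `(M, m, ℓ, t, ε)`-fuzzy extractor. -/
theorem fuzzy_extractor_from_secure_sketch {M R S : Type} {n r ℓ : ℕ}
    [Fintype M] [Fintype R] [Fintype S] [Nonempty R] [DecidableEq S]
    (dis : M → M → ℝ) (t m mt ε : ℝ)
    (rep : M → (Fin n → Bool)) (hrep : Function.Injective rep)
    (SS : M → R → S) (Rec : M → S → M)
    (Ext : (Fin n → Bool) → (Fin r → Bool) → (Fin ℓ → Bool))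
    (hcorr : ∀ w w' rr, dis w w' ≤ t → Rec w' (SS w rr) = w)
    (hsec : ∀ pW : M → ℝ, IsDist pW → m ≤ minEntropy pW →
      mt ≤ avgMinEntropy (fun ws : M × S =>
        pW ws.1 * ((Finset.univ.filter fun rr => SS ws.1 rr = ws.2).card : ℝ)
          / (Fintype.card R : ℝ)))
    (hExt : ∀ (ι : Type) [Fintype ι] (p : (Fin n → Bool) × ι → ℝ),
      IsDist p → mt ≤ avgMinEntropy p →
        statDist (extDistI Ext p) (extUniI (X := Fin r → Bool) (O := Fin ℓ → Bool) p) ≤ ε) :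
    -- correctness of the fuzzy extractor
    (∀ (w w' : M) (c : R × (Fin r → Bool)), dis w w' ≤ t →
      Ext (rep (Rec w' (SS w c.1))) c.2 = Ext (rep w) c.2) ∧
    -- security of the fuzzy extractor
    (∀ pW : M → ℝ, IsDist pW → m ≤ minEntropy pW →
      statDist
        (genDist (fun w (c : R × (Fin r → Bool)) => (Ext (rep w) c.2, (SS w c.1, c.2))) pW)
        (genUni (fun w (c : R × (Fin r → Bool)) => (Ext (rep w) c.2, (SS w c.1, c.2))) pW)
        ≤ ε) := by
    classical
  refine ⟨fun w w' c h => by rw [hcorr w w' c.1 h], ?_⟩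
  intro pW hpW hm
  haveI hMne : Nonempty M := by
    rcases isEmpty_or_nonempty M with h | h
    · exfalso
      have h2 := hpW.2
      rw [Finset.univ_eq_empty, Finset.sum_empty] at h2
      norm_num at h2
    · exact h
  obtain ⟨w0⟩ := (inferInstance : Nonempty M)
  have hR : (0:ℝ) < (Fintype.card R : ℝ) := by exact_mod_cast Fintype.card_pos
  set q : M × S → ℝ := fun ws : M × S =>
    pW ws.1 * ((Finset.univ.filter fun rr => SS ws.1 rr = ws.2).card : ℝ)
      / (Fintype.card R : ℝ) with hqdef
  set p : (Fin n → Bool) × S → ℝ :=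
    fun as => ∑ w, if rep w = as.1 then q (w, as.2) else 0 with hpdef
  have hq0 : ∀ ws, 0 ≤ q ws := by
    intro ws
    rw [hqdef]
    apply div_nonneg _ (le_of_lt hR)
    exact mul_nonneg (hpW.1 _) (Nat.cast_nonneg _)
  have hp_rep : ∀ w s, p (rep w, s) = q (w, s) := by
    intro w s
    simp only [hpdef]
    rw [Finset.sum_eq_single w]
    · simp
    · intro b _ hb
      exact if_neg fun h => hb (hrep h)
    · simp
  have hp0 : ∀ as, 0 ≤ p as := by
    intro as
    simp only [hpdef]
    refine Finset.sum_nonneg fun w _ => ?_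
    split
    · exact hq0 _
    · exact le_refl 0
  have hqsum : ∀ w, ∑ s, q (w, s) = pW w := by
    intro w
    have hcard : ∑ s, ((Finset.univ.filter fun rr => SS w rr = s).card : ℝ)
        = (Fintype.card R : ℝ) := by
      rw [← Nat.cast_sum]
      congr 1
      rw [← Finset.card_univ]
      exact (Finset.card_eq_sum_card_fiberwise fun x _ => Finset.mem_univ (SS w x)).symm
    simp only [hqdef]
    rw [← Finset.sum_div, ← Finset.mul_sum, hcard, mul_div_assoc,
      div_self (ne_of_gt hR), mul_one]
  have hpsum : ∑ as, p as = 1 := by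
    simp only [hpdef]
    rw [Finset.sum_comm]
    calc ∑ w, ∑ as : (Fin n → Bool) × S, (if rep w = as.1 then q (w, as.2) else 0)
        = ∑ w, ∑ s, q (w, s) := by
          refine Finset.sum_congr rfl fun w _ => ?_
          rw [Fintype.sum_prod_type, Finset.sum_comm]
          simp [Finset.sum_ite_eq]
      _ = 1 := by simp only [hqsum]; exact hpW.2
  have hB1 : ∀ s : S, BddAbove (Set.range fun a => p (a, s)) :=
    fun s => Set.Finite.bddAbove (Set.finite_range _)
  have hB2 : ∀ s : S, BddAbove (Set.range fun w => q (w, s)) :=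
    fun s => Set.Finite.bddAbove (Set.finite_range _)
  have hsup : ∀ s, (⨆ a, p (a, s)) = ⨆ w, q (w, s) := by
    intro s
    apply le_antisymm
    · apply ciSup_le
      intro a
      by_cases ha : ∃ w, rep w = a
      · obtain ⟨w, rfl⟩ := ha
        rw [hp_rep]
        exact le_ciSup (hB2 s) w
      · have hz : p (a, s) = 0 := by
          rw [hpdef]
          exact Finset.sum_eq_zero fun w _ => if_neg fun h => ha ⟨w, h⟩
        rw [hz]
        exact le_trans (hq0 (w0, s)) (le_ciSup (hB2 s) w0)
    · apply ciSup_le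
      intro w
      rw [← hp_rep]
      exact le_ciSup (hB1 s) (rep w)
  have havg : mt ≤ avgMinEntropy p := by
    have h1 := hsec pW hpW hm
    unfold avgMinEntropy at h1 ⊢
    rwa [Finset.sum_congr rfl fun s _ => hsup s]
  have hExt' := hExt S p ⟨hp0, hpsum⟩ havg
  -- pointwise identification of the two pairs of distributions
  have hAsum : ∀ (y : Fin ℓ → Bool) (x : Fin r → Bool) (s : S),
      (∑ a, if Ext a x = y then p (a, s) else 0)
        = ∑ w, if Ext (rep w) x = y then q (w, s) else 0 := by
    intro y x s
    simp only [hpdef]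
    rw [Finset.sum_congr rfl (fun a _ => by
      rw [show (if Ext a x = y then (∑ w, if rep w = a then q (w, s) else 0) else 0)
          = ∑ w, if Ext a x = y then (if rep w = a then q (w, s) else 0) else 0 by
        split <;> simp])]
    rw [Finset.sum_comm]
    refine Finset.sum_congr rfl fun w _ => ?_
    rw [Finset.sum_eq_single (rep w)]
    · simp
    · intro b _ hb
      have : (if rep w = b then q (w, s) else 0) = 0 := if_neg fun h => hb h.symm
      rw [this]
      simp
    · simp
  have key : ∀ (y : Fin ℓ → Bool) (s : S) (x : Fin r → Bool),
      (∑ wc : M × (R × (Fin r → Bool)),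
          if (Ext (rep wc.1) wc.2.2, (SS wc.1 wc.2.1, wc.2.2)) = (y, (s, x))
          then pW wc.1 else 0)
        = (Fintype.card R : ℝ) * ∑ w, if Ext (rep w) x = y then q (w, s) else 0 := by
    intro y s x
    rw [Fintype.sum_prod_type]
    have step : ∀ w : M,
        (∑ c : R × (Fin r → Bool),
            if (Ext (rep w) c.2, (SS w c.1, c.2)) = (y, (s, x)) then pW w else 0)
          = if Ext (rep w) x = y
            then pW w * ((Finset.univ.filter fun rr => SS w rr = s).card : ℝ) else 0 := by
      intro w
      rw [Fintype.sum_prod_type]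
      have inner : ∀ rr : R,
          (∑ xx : Fin r → Bool,
              if (Ext (rep w) xx, (SS w rr, xx)) = (y, (s, x)) then pW w else 0)
            = if Ext (rep w) x = y ∧ SS w rr = s then pW w else 0 := by
        intro rr
        rw [Finset.sum_eq_single x]
        · simp [Prod.ext_iff]
        · intro b _ hb
          refine if_neg fun h => hb ?_
          exact (Prod.ext_iff.1 (Prod.ext_iff.1 h).2).2
        · simp
      simp only [inner]
      by_cases hy : Ext (rep w) x = y
      · simp only [hy, true_and, if_true]
        rw [Finset.sum_ite, Finset.sum_const, Finset.sum_const_zero, add_zero,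
          nsmul_eq_mul, mul_comm]
      · simp [hy]
    simp only [step]
    rw [Finset.mul_sum]
    refine Finset.sum_congr rfl fun w _ => ?_
    rw [mul_ite, mul_zero]
    by_cases hc : Ext (rep w) x = y
    · simp only [hc, if_true, hqdef]
      field_simp <;> ring
    · simp [hc]
  set Gen : M → R × (Fin r → Bool) → (Fin ℓ → Bool) × (S × (Fin r → Bool)) :=
    fun w c => (Ext (rep w) c.2, (SS w c.1, c.2)) with hGdef
  have hXpos : (0:ℝ) < (Fintype.card (Fin r → Bool) : ℝ) := by exact_mod_cast Fintype.card_pos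
  have hgd : ∀ (y : Fin ℓ → Bool) (s : S) (x : Fin r → Bool),
      genDist Gen pW (y, (s, x)) = extDistI Ext p (y, (x, s)) := by
    intro y s x
    simp only [genDist, extDistI, hGdef]
    rw [key y s x, hAsum y x s, Fintype.card_prod, Nat.cast_mul]
    have hR' : (Fintype.card R : ℝ) ≠ 0 := ne_of_gt hR
    have hX' : (Fintype.card (Fin r → Bool) : ℝ) ≠ 0 := ne_of_gt hXpos
    field_simp <;> ring
  have hgu : ∀ (y : Fin ℓ → Bool) (s : S) (x : Fin r → Bool),
      genUni Gen pW (y, (s, x)) = extUniI (X := Fin r → Bool) (O := Fin ℓ → Bool) p (y, (x, s)) := by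
    intro y s x
    simp only [genUni, extUniI]
    rw [Finset.sum_congr rfl fun y' _ => hgd y' s x]
    simp only [extDistI]
    rw [← Finset.sum_div, Finset.sum_comm]
    have collapse : ∀ a : Fin n → Bool,
        (∑ y' : Fin ℓ → Bool, if Ext a x = y' then p (a, s) else 0) = p (a, s) := by
      intro a
      simp
    rw [Finset.sum_congr rfl fun a _ => collapse a, div_div, mul_comm]
  have hfin : statDist (genDist Gen pW) (genUni Gen pW)
      = statDist (extDistI Ext p) (extUniI (X := Fin r → Bool) (O := Fin ℓ → Bool) p) := by
    unfold statDist
    congr 1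
    refine Fintype.sum_equiv ((Equiv.refl (Fin ℓ → Bool)).prodCongr
      (Equiv.prodComm S (Fin r → Bool))) _ _ ?_
    rintro ⟨y, s, x⟩
    simp only [Equiv.prodCongr_apply, Equiv.refl_apply, Equiv.prodComm_apply, Prod.map,
      Prod.swap]
    rw [hgd y s x, hgu y s x]
  rw [hfin]
  exact hExt'
end

section
/- If f: M₁ → M₂ is a (t₁, t₂, m₁, m₂)-biometric embedding between finite metric spaces and (Gen, Rep) is an (M₂, m₂, ℓ, t₂, ε)-fuzzy extractor, then the pair (Gen', Rep') defined by Gen'(w) = Gen(f(w)) and Rep'(w', P) = Rep(f(w'), P) is an (M₁, m₁, ℓ, t₁, ε)-fuzzy extractor. -/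
open Finset

/-- If `f : M₁ → M₂` is a `(t₁, t₂, m₁, m₂)`-biometric embedding and
`(Gen, Rep)` is an `(M₂, m₂, ℓ, t₂, ε)`-fuzzy extractor, then `Gen' = Gen ∘ f`,
`Rep'(w', P) = Rep(f w', P)` is an `(M₁, m₁, ℓ, t₁, ε)`-fuzzy extractor. -/
theorem fuzzy_extractor_of_biometric_embedding {M₁ M₂ C P : Type} {ℓ : ℕ}
    [Fintype M₁] [Fintype M₂] [Fintype C] [Fintype P] [DecidableEq M₂] [DecidableEq P]
    (dis₁ : M₁ → M₁ → ℝ) (dis₂ : M₂ → M₂ → ℝ) (f : M₁ → M₂)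
    (t₁ t₂ m₁ m₂ ε : ℝ)
    -- f is a (t₁, t₂, m₁, m₂)-biometric embedding:
    (hdist : ∀ w w' : M₁, dis₁ w w' ≤ t₁ → dis₂ (f w) (f w') ≤ t₂)
    (hent : ∀ W₁ : M₁ → ℝ, IsDist W₁ → m₁ ≤ minEntropy W₁ →
      m₂ ≤ minEntropy (fun y : M₂ => ∑ w ∈ Finset.univ.filter fun w => f w = y, W₁ w))
    (Gen : M₂ → C → (Fin ℓ → Bool) × P) (Rep : M₂ → P → (Fin ℓ → Bool))
    -- (Gen, Rep) is an (M₂, m₂, ℓ, t₂, ε)-fuzzy extractor: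
    (hcorr : ∀ (v v' : M₂) (c : C), dis₂ v v' ≤ t₂ → Rep v' (Gen v c).2 = (Gen v c).1)
    (hsec : ∀ W : M₂ → ℝ, IsDist W → m₂ ≤ minEntropy W →
      statDist (genDist Gen W) (genUni Gen W) ≤ ε) :
    -- (Gen ∘ f, Rep ∘ f) is an (M₁, m₁, ℓ, t₁, ε)-fuzzy extractor:
    (∀ (w w' : M₁) (c : C), dis₁ w w' ≤ t₁ →
      Rep (f w') (Gen (f w) c).2 = (Gen (f w) c).1) ∧
    (∀ W : M₁ → ℝ, IsDist W → m₁ ≤ minEntropy W →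
      statDist (genDist (fun w c => Gen (f w) c) W)
        (genUni (fun w c => Gen (f w) c) W) ≤ ε) := by
  have genkey : ∀ W : M₁ → ℝ,
      genDist (fun w c => Gen (f w) c) W
        = genDist Gen (fun y : M₂ => ∑ w ∈ Finset.univ.filter fun w => f w = y, W w) := by
    intro W
    funext yp
    unfold genDist
    congr 1
    rw [Fintype.sum_prod_type, Fintype.sum_prod_type]
    rw [← Finset.sum_fiberwise univ f (fun w => ∑ c : C, if Gen (f w) c = yp then W w else 0)]
    refine Finset.sum_congr rfl fun v _ => ?_
    rw [Finset.sum_comm]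
    refine Finset.sum_congr rfl fun c _ => ?_
    have h1 : ∀ w ∈ Finset.univ.filter fun w => f w = v,
        (if Gen (f w) c = yp then W w else 0) = (if Gen v c = yp then W w else 0) := by
      intro w hw
      rw [Finset.mem_filter] at hw
      rw [hw.2]
    rw [Finset.sum_congr rfl h1]
    split_ifs with h
    · rfl
    · exact Finset.sum_const_zero
  constructor
  · intro w w' c h
    exact hcorr (f w) (f w') c (hdist w w' h)
  · intro W hW hm
    set W₂ : M₂ → ℝ := fun y : M₂ => ∑ w ∈ Finset.univ.filter fun w => f w = y, W w with hW₂
    have hdist2 : IsDist W₂ := by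
      constructor
      · intro y
        exact Finset.sum_nonneg fun w _ => hW.1 w
      · rw [← hW.2]
        exact Finset.sum_fiberwise univ f W
    have hk := genkey W
    rw [hk]
    have h2 : genUni (fun w c => Gen (f w) c) W = genUni Gen W₂ := by
      funext yp
      unfold genUni
      rw [hk]
    rw [h2]
    exact hsec W₂ hdist2 (hent W hW hm)
end

section
/- Odd power sums determine small sets in characteristic 2: let F be a finite field of characteristic 2 and let t ≥ 1. If A and B are subsets of F ∖ {0} with |A| ≤ t and |B| ≤ t, and Σ_{x∈A} x^i = Σ_{x∈B} x^i (in F) for every odd integer i with 1 ≤ i ≤ 2t−1, then A = B. -/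
open Finset

lemma vanishing_power_sums_empty {F : Type} [Field F] (m : ℕ) (hm : 0 < m)
    (v : Fin m → F) (hinj : Function.Injective v) (hv0 : ∀ j, v j ≠ 0)
    (h : ∀ i : Fin m, ∑ j, v j ^ ((i : ℕ) + 1) = 0) : False := by
  classical
  set N : Matrix (Fin m) (Fin m) F := Matrix.of fun i j => v j ^ ((i : ℕ) + 1) with hN
  have hdet : N.det ≠ 0 := by
    have hT : N.transpose = Matrix.diagonal v * Matrix.vandermonde v := by
      ext i j
      simp [hN, Matrix.mul_apply, Matrix.diagonal, Matrix.vandermonde,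
        Finset.sum_ite_eq, pow_succ, mul_comm]
    have : N.det = (∏ j, v j) * (Matrix.vandermonde v).det := by
      rw [← Matrix.det_transpose, hT, Matrix.det_mul, Matrix.det_diagonal]
    rw [this, Matrix.det_vandermonde]
    refine mul_ne_zero (Finset.prod_ne_zero_iff.2 fun j _ => hv0 j) ?_
    refine Finset.prod_ne_zero_iff.2 fun i _ => Finset.prod_ne_zero_iff.2 fun j hj => ?_
    have hij : i < j := Finset.mem_Ioi.1 hj
    exact sub_ne_zero.2 fun hEq => absurd (hinj hEq.symm) (ne_of_lt hij)
  have hmul : N.mulVec (fun _ => (1 : F)) = 0 := by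
    funext i
    simpa [Matrix.mulVec, dotProduct, hN] using h i
  have hinv : Invertible N := N.invertibleOfIsUnitDet (isUnit_iff_ne_zero.2 hdet)
  have : (fun _ => (1 : F)) = (0 : Fin m → F) := by
    calc (fun _ => (1 : F)) = N⁻¹.mulVec (N.mulVec fun _ => (1 : F)) := by
          rw [Matrix.mulVec_mulVec, Matrix.nonsing_inv_mul _ (isUnit_iff_ne_zero.2 hdet),
            Matrix.one_mulVec]
      _ = 0 := by rw [hmul, Matrix.mulVec_zero]
  exact one_ne_zero (congrFun this ⟨0, hm⟩)

/-- Odd power sums determine small sets in characteristic 2: if `A` and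
`B` are subsets of `F ∖ {0}` of size at most `t` whose power sums agree for every odd
exponent `i` with `1 ≤ i ≤ 2t − 1`, then `A = B`. -/
theorem odd_power_sums_determine_small_sets {F : Type} [Field F] [Fintype F] [DecidableEq F]
    [CharP F 2] (t : ℕ) (ht : 1 ≤ t) (A B : Finset F)
    (hA0 : (0 : F) ∉ A) (hB0 : (0 : F) ∉ B)
    (hAcard : A.card ≤ t) (hBcard : B.card ≤ t)
    (hsum : ∀ i : ℕ, Odd i → 1 ≤ i → i ≤ 2 * t - 1 →
      ∑ x ∈ A, x ^ i = ∑ x ∈ B, x ^ i) :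
    A = B := by
  classical
  set C : Finset F := (A \ B) ∪ (B \ A) with hC
  have hdisj : Disjoint (A \ B) (B \ A) :=
    Finset.disjoint_left.2 fun x hx hx' => (Finset.mem_sdiff.1 hx').2 (Finset.mem_sdiff.1 hx).1
  -- power sums over C vanish
  have hCsum : ∀ i : ℕ, 1 ≤ i → i ≤ 2 * t → ∑ x ∈ C, x ^ i = 0 := by
    intro i
    induction i using Nat.strong_induction_on with
    | _ i ih =>
      intro hi1 hi2
      have key : ∀ j : ℕ, (∑ x ∈ A, x ^ j = ∑ x ∈ B, x ^ j) → ∑ x ∈ C, x ^ j = 0 := by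
        intro j hj
        have hA' : ∑ x ∈ A, x ^ j = ∑ x ∈ A \ B, x ^ j + ∑ x ∈ A ∩ B, x ^ j := by
          rw [← Finset.sum_union (Finset.disjoint_sdiff_inter A B),
            Finset.sdiff_union_inter]
        have hB' : ∑ x ∈ B, x ^ j = ∑ x ∈ B \ A, x ^ j + ∑ x ∈ A ∩ B, x ^ j := by
          rw [Finset.inter_comm, ← Finset.sum_union (Finset.disjoint_sdiff_inter B A),
            Finset.sdiff_union_inter]
        have hd : ∑ x ∈ A \ B, x ^ j = ∑ x ∈ B \ A, x ^ j := by
          have := hj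
          rw [hA', hB'] at this
          exact add_right_cancel this
        rw [hC, Finset.sum_union hdisj, hd, ← two_mul]
        simp [CharTwo.two_eq_zero]
      rcases Nat.even_or_odd i with he | ho
      · obtain ⟨j, rfl⟩ := he
        have hj1 : 1 ≤ j := by omega
        have hji : j < j + j := by omega
        have hjt : j ≤ 2 * t := by omega
        have hzero := ih j hji hj1 hjt
        have hsq : ∑ x ∈ C, x ^ (j + j) = (∑ x ∈ C, x ^ j) ^ 2 := by
          rw [sum_pow_char (p := 2)]
          refine Finset.sum_congr rfl fun x _ => ?_
          rw [← pow_mul]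
          ring_nf
        rw [hsq, hzero]
        ring
      · have hle : i ≤ 2 * t - 1 := by
          rcases ho with ⟨k, rfl⟩; omega
        exact key i (hsum i ho hi1 hle)
  -- C is empty via Vandermonde
  have hCcard : C.card ≤ 2 * t := by
    calc C.card ≤ (A \ B).card + (B \ A).card := Finset.card_union_le _ _
      _ ≤ A.card + B.card :=
          Nat.add_le_add (Finset.card_le_card (Finset.sdiff_subset))
            (Finset.card_le_card (Finset.sdiff_subset))
      _ ≤ 2 * t := by omega
  have hC0 : (0 : F) ∉ C := by
    rw [hC]
    simp only [Finset.mem_union, Finset.mem_sdiff]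
    rintro (⟨h1, _⟩ | ⟨h1, _⟩)
    exacts [hA0 h1, hB0 h1]
  have hCempty : C = ∅ := by
    by_contra hne
    have hm : 0 < C.card := Finset.card_pos.2 (Finset.nonempty_iff_ne_empty.2 hne)
    set m := C.card with hmdef
    let e : Fin m ≃ {x // x ∈ C} := C.equivFin.symm
    refine vanishing_power_sums_empty m hm (fun j => (e j : F)) ?_ ?_ ?_
    · intro a b hab
      exact e.injective (Subtype.ext hab)
    · intro j
      exact fun h0 => hC0 (h0 ▸ (e j).2)
    · intro i
      have : ∑ j : Fin m, ((e j : F)) ^ ((i : ℕ) + 1)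
          = ∑ x ∈ C, x ^ ((i : ℕ) + 1) := by
        rw [← Finset.sum_attach C (fun x => x ^ ((i : ℕ) + 1))]
        exact Fintype.sum_equiv e _ _ (fun j => rfl)
      rw [this]
      exact hCsum _ (by omega) (by omega)
  have h1 : A \ B = ∅ := by
    have := Finset.union_eq_empty.1 hCempty
    exact this.1
  have h2 : B \ A = ∅ := (Finset.union_eq_empty.1 hCempty).2
  apply Finset.Subset.antisymm
  · exact (Finset.sdiff_eq_empty_iff_subset.1 h1)
  · exact (Finset.sdiff_eq_empty_iff_subset.1 h2)
end

section
/- Shingling is a biometric embedding of edit distance into set difference: for any shingle length c with 1 ≤ c ≤ n, the c-shingling map SH_c is a (t₁, t₂ = (2c−1)·t₁, m₁, m₂ = m₁ − ⌈n/c⌉·log₂(n−c+1))-biometric embedding of Edit_F(n) into SDif(F^c). Concretely: (i) for any strings w, w' of length n over F whose edit distance is at most t₁, |SH_c(w) Δ SH_c(w')| ≤ (2c−1)·t₁; (ii) for any distribution W on F^n with H∞(W) ≥ m₁, H∞(SH_c(W)) ≥ m₁ − ⌈n/c⌉·log₂(n−c+1); and the same holds for average min-entropy conditioned on any auxiliary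 random variable I. -/
/-
Part (i): inserting one character into a string destroys only the shingles that straddle the
insertion point (at most `c - 1` of them) and creates at most `c` new ones, so each edit step
moves the shingling by at most `2c - 1` in set difference.

Part (ii): a string of length `n ≤ m c` with `m = ⌈n/c⌉` is determined by the `m` shingles
starting at positions `0, c, 2c, …` (the last one pushed back to `n - c`). Hence every fiber of
`SH_c` has at most `(n - c + 1)^m` elements, and a map with fibers of size at most `K` loses
at most `log₂ K` bits of (average) min-entropy.
-/

open Finset

/-- A single edit step on strings (lists): insertion or deletion of one character. -/
def EditStep {F : Type} (u v : List F) : Prop :=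
  (∃ (l : List F) (x : F) (r : List F), u = l ++ r ∧ v = l ++ x :: r) ∨
  (∃ (l : List F) (x : F) (r : List F), u = l ++ x :: r ∧ v = l ++ r)

/-- `EditLe t u v` means the edit distance (insertions and deletions) between `u` and `v`
is at most `t`. -/
def EditLe {F : Type} : ℕ → List F → List F → Prop
  | 0, u, v => u = v
  | t + 1, u, v => EditLe t u v ∨ ∃ z, EditStep u z ∧ EditLe t z v

/-- The `c`-shingle of the string `w` starting at position `j`. -/
def shingleAt {F : Type} [Inhabited F] {n : ℕ} (w : Fin n → F) (c j : ℕ) : Fin c → F :=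
  fun i => if h : j + i.1 < n then w ⟨j + i.1, h⟩ else default

/-- The `c`-shingling of a string `w` of length `n`: the set of all its `c`-shingles. -/
def shingling {F : Type} [Inhabited F] [DecidableEq F] {n : ℕ} (c : ℕ) (w : Fin n → F) :
    Finset (Fin c → F) :=
  (Finset.range (n - c + 1)).image fun j => shingleAt w c j

open scoped symmDiff

section EditDistance

variable {F : Type}

theorem card_symmDiff_le_of_editLe {α : Type*} [DecidableEq α] (S : List F → Finset α)
    {k : ℕ} (hS : ∀ u v, EditStep u v → #(S u ∆ S v) ≤ k) :
    ∀ (t : ℕ) (u v : List F), EditLe t u v → #(S u ∆ S v) ≤ k * t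
  | 0, u, v, h => by
    rw [EditLe] at h
    simp [h]
  | t + 1, u, v, h => by
    rw [EditLe] at h
    rcases h with h | ⟨z, huz, hzv⟩
    · exact (card_symmDiff_le_of_editLe S hS t u v h).trans (Nat.mul_le_mul_left k t.le_succ)
    · calc #(S u ∆ S v)
          ≤ #(S u ∆ S z ∪ S z ∆ S v) := card_le_card (symmDiff_triangle _ _ _)
        _ ≤ #(S u ∆ S z) + #(S z ∆ S v) := card_union_le _ _
        _ ≤ k + k * t := add_le_add (hS u z huz) (card_symmDiff_le_of_editLe S hS t z v hzv)
        _ = k * (t + 1) := by ring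

variable [Inhabited F]

def listShingleAt (u : List F) (c j : ℕ) : Fin c → F :=
  fun i => u.getD (j + i) default

theorem listShingleAt_append_cons_of_add_le {c j : ℕ} (l r : List F) (x : F)
    (hj : j + c ≤ l.length) : listShingleAt (l ++ x :: r) c j = listShingleAt (l ++ r) c j := by
  funext i
  have hi : j + i < l.length := by omega
  simp only [listShingleAt, List.getD_append _ _ _ _ hi]

theorem listShingleAt_append_cons_succ {c j : ℕ} (l r : List F) (x : F) (hj : l.length ≤ j) :
    listShingleAt (l ++ x :: r) c (j + 1) = listShingleAt (l ++ r) c j := by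
  funext i
  simp only [listShingleAt, List.getD_append_right _ _ _ _ (by omega : l.length ≤ j + 1 + i),
    List.getD_append_right _ _ _ _ (by omega : l.length ≤ j + i),
    show j + 1 + i - l.length = (j + i - l.length) + 1 by omega, List.getD_cons_succ]

variable [DecidableEq F]

/-- Unlike `n - c + 1` in `shingling`, the truncated `u.length + 1 - c` gives strings shorter than
`c` no shingles at all; the single-edit bound needs this for edit paths through short strings. -/
def listShingling (c : ℕ) (u : List F) : Finset (Fin c → F) :=
  (range (u.length + 1 - c)).image (listShingleAt u c)

theorem listShingling_ofFn {n c : ℕ} (hcn : c ≤ n) (w : Fin n → F) :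
    listShingling c (List.ofFn w) = shingling c w := by
  rw [listShingling, shingling, List.length_ofFn, show n + 1 - c = n - c + 1 by omega]
  refine image_congr fun j hj => funext fun i => ?_
  have hji : j + i < n := by simp only [coe_range, Set.mem_Iio] at hj; omega
  simp [listShingleAt, shingleAt, hji]

theorem listShingleAt_mem_listShingling {c j : ℕ} {u : List F} (hj : j + c ≤ u.length) :
    listShingleAt u c j ∈ listShingling c u :=
  mem_image_of_mem _ (mem_range.2 (by omega))

theorem listShingling_sdiff_insert_subset (c : ℕ) (l r : List F) (x : F) :
    listShingling c (l ++ r) \ listShingling c (l ++ x :: r) ⊆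
      (Ico (l.length + 1 - c) l.length).image (listShingleAt (l ++ r) c) := by
  intro s hs
  obtain ⟨hs, hs'⟩ := mem_sdiff.1 hs
  obtain ⟨j, hj, rfl⟩ := mem_image.1 hs
  simp only [mem_range, List.length_append] at hj
  by_cases hleft : j + c ≤ l.length
  · rw [← listShingleAt_append_cons_of_add_le l r x hleft] at hs'
    exact absurd (listShingleAt_mem_listShingling
      (by simp only [List.length_append, List.length_cons]; omega)) hs'
  by_cases hright : l.length ≤ j
  · rw [← listShingleAt_append_cons_succ l r x hright] at hs'
    exact absurd (listShingleAt_mem_listShingling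
      (by simp only [List.length_append, List.length_cons]; omega)) hs'
  exact mem_image_of_mem _ (mem_Ico.2 ⟨by omega, by omega⟩)

theorem listShingling_insert_sdiff_subset (c : ℕ) (l r : List F) (x : F) :
    listShingling c (l ++ x :: r) \ listShingling c (l ++ r) ⊆
      (Icc (l.length + 1 - c) l.length).image (listShingleAt (l ++ x :: r) c) := by
  intro s hs
  obtain ⟨hs, hs'⟩ := mem_sdiff.1 hs
  obtain ⟨j, hj, rfl⟩ := mem_image.1 hs
  simp only [mem_range, List.length_append, List.length_cons] at hj
  by_cases hleft : j + c ≤ l.length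
  · rw [listShingleAt_append_cons_of_add_le l r x hleft] at hs'
    exact absurd (listShingleAt_mem_listShingling (by simp only [List.length_append]; omega)) hs'
  by_cases hright : l.length + 1 ≤ j
  · obtain ⟨j, rfl⟩ : ∃ j', j = j' + 1 := ⟨j - 1, by omega⟩
    rw [listShingleAt_append_cons_succ l r x (by omega)] at hs'
    exact absurd (listShingleAt_mem_listShingling (by simp only [List.length_append]; omega)) hs'
  exact mem_image_of_mem _ (mem_Icc.2 ⟨by omega, by omega⟩)

theorem card_symmDiff_listShingling_insert_le (c : ℕ) (l r : List F) (x : F) :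
    #(listShingling c (l ++ r) ∆ listShingling c (l ++ x :: r)) ≤ 2 * c - 1 := by
  have hdel := (card_le_card (listShingling_sdiff_insert_subset c l r x)).trans card_image_le
  have hins := (card_le_card (listShingling_insert_sdiff_subset c l r x)).trans card_image_le
  rw [Nat.card_Ico] at hdel
  rw [Nat.card_Icc] at hins
  calc #(listShingling c (l ++ r) ∆ listShingling c (l ++ x :: r))
      ≤ #(listShingling c (l ++ r) \ listShingling c (l ++ x :: r)) +
          #(listShingling c (l ++ x :: r) \ listShingling c (l ++ r)) := by
        rw [symmDiff_def]; exact card_union_le _ _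
    _ ≤ 2 * c - 1 := by omega

theorem card_symmDiff_listShingling_le_of_editStep (c : ℕ) {u v : List F} (h : EditStep u v) :
    #(listShingling c u ∆ listShingling c v) ≤ 2 * c - 1 := by
  rcases h with ⟨l, x, r, rfl, rfl⟩ | ⟨l, x, r, rfl, rfl⟩
  · exact card_symmDiff_listShingling_insert_le c l r x
  · rw [symmDiff_comm]
    exact card_symmDiff_listShingling_insert_le c l r x

theorem card_symmDiff_shingling_le_of_editLe {n c t : ℕ} (hcn : c ≤ n) {w w' : Fin n → F}
    (h : EditLe t (List.ofFn w) (List.ofFn w')) :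
    #(shingling c w ∆ shingling c w') ≤ (2 * c - 1) * t := by
  rw [← listShingling_ofFn hcn, ← listShingling_ofFn hcn]
  exact card_symmDiff_le_of_editLe (listShingling c)
    (fun _ _ => card_symmDiff_listShingling_le_of_editStep c) t _ _ h

end EditDistance

section Entropy

variable {α β ι : Type*} [Fintype α] [Fintype ι]

/-- The joint distribution of `(f A, I)` given that of `(A, I)`. -/
def mapDist [DecidableEq β] (f : α → β) (p : α × ι → ℝ) : β × ι → ℝ :=
  fun x => ∑ a ∈ univ.filter fun a => f a = x.1, p (a, x.2)

theorem IsDist.mapDist [Fintype β] [DecidableEq β] {p : α × ι → ℝ} (hp : IsDist p)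
    (f : α → β) : IsDist (mapDist f p) := by
  refine ⟨fun x => sum_nonneg fun a _ => hp.1 _, ?_⟩
  rw [← hp.2, Fintype.sum_prod_type_right, Fintype.sum_prod_type_right]
  exact sum_congr rfl fun i _ => sum_fiberwise univ f fun a => p (a, i)

theorem IsDist.sum_iSup_pos [Fintype β] {q : β × ι → ℝ} (hq : IsDist q) :
    0 < ∑ i, ⨆ b, q (b, i) := by
  have hbound : (1 : ℝ) ≤ Fintype.card β * ∑ i, ⨆ b, q (b, i) := by
    calc (1 : ℝ) = ∑ i, ∑ b, q (b, i) := by rw [← hq.2, Fintype.sum_prod_type_right]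
      _ ≤ ∑ i, Fintype.card β • ⨆ b, q (b, i) := sum_le_sum fun i _ =>
          sum_le_card_nsmul _ _ _ fun b _ =>
            le_ciSup (f := fun b => q (b, i)) (Set.finite_range _).bddAbove b
      _ = Fintype.card β * ∑ i, ⨆ b, q (b, i) := by simp [mul_sum]
  by_contra! h
  nlinarith [(Nat.cast_nonneg (Fintype.card β) : (0 : ℝ) ≤ _)]

theorem sum_iSup_mapDist_le [DecidableEq β] {p : α × ι → ℝ} (hp : ∀ x, 0 ≤ p x)
    {f : α → β} {K : ℕ} (hf : ∀ b, #(univ.filter fun a => f a = b) ≤ K) :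
    ∑ i, ⨆ b, mapDist f p (b, i) ≤ K * ∑ i, ⨆ a, p (a, i) := by
  rw [mul_sum]
  refine sum_le_sum fun i _ => Real.iSup_le (fun b => ?_) ?_
  · calc mapDist f p (b, i) ≤ #(univ.filter fun a => f a = b) • ⨆ a, p (a, i) :=
          sum_le_card_nsmul _ _ _ fun a _ =>
            le_ciSup (f := fun a => p (a, i)) (Set.finite_range _).bddAbove a
      _ ≤ K * ⨆ a, p (a, i) := by
          rw [nsmul_eq_mul]
          exact mul_le_mul_of_nonneg_right (by exact_mod_cast hf b)
            (Real.iSup_nonneg fun a => hp _)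
  · exact mul_nonneg K.cast_nonneg (Real.iSup_nonneg fun a => hp _)

theorem avgMinEntropy_sub_logb_le_mapDist [Fintype β] [DecidableEq β] {p : α × ι → ℝ}
    (hp : IsDist p) {f : α → β} {K : ℕ} (hf : ∀ b, #(univ.filter fun a => f a = b) ≤ K) :
    avgMinEntropy p - Real.logb 2 K ≤ avgMinEntropy (mapDist f p) := by
  have hpos := (hp.mapDist f).sum_iSup_pos
  have hle := sum_iSup_mapDist_le hp.1 hf
  have hS : 0 ≤ ∑ i, ⨆ a, p (a, i) := sum_nonneg fun i _ => Real.iSup_nonneg fun a => hp.1 _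
  have hKS := hpos.trans_le hle
  have hK : (0 : ℝ) < K := pos_of_mul_pos_left hKS hS
  have hS' := pos_of_mul_pos_right hKS hK.le
  have hlog := Real.logb_le_logb_of_le one_lt_two hpos hle
  rw [Real.logb_mul hK.ne' hS'.ne'] at hlog
  simp only [avgMinEntropy]
  linarith

theorem minEntropy_eq_avgMinEntropy_unit (q : α → ℝ) :
    minEntropy q = avgMinEntropy fun x : α × Unit => q x.1 := by
  simp [minEntropy, avgMinEntropy]

theorem minEntropy_sub_logb_le_map [Fintype β] [DecidableEq β] {p : α → ℝ} (hp : IsDist p)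
    {f : α → β} {K : ℕ} (hf : ∀ b, #(univ.filter fun a => f a = b) ≤ K) :
    minEntropy p - Real.logb 2 K ≤
      minEntropy fun b => ∑ a ∈ univ.filter fun a => f a = b, p a := by
  have hp' : IsDist fun x : α × Unit => p x.1 :=
    ⟨fun x => hp.1 _, by rw [← hp.2, Fintype.sum_prod_type]; simp⟩
  rw [minEntropy_eq_avgMinEntropy_unit, minEntropy_eq_avgMinEntropy_unit]
  exact avgMinEntropy_sub_logb_le_mapDist hp' hf

end Entropy

section Fibers

variable {F : Type} [Inhabited F] {n c : ℕ}

theorem shingleAt_sub (w : Fin n → F) {j : ℕ} (t : Fin n) (hjt : j ≤ t) (htj : t < j + c) :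
    shingleAt w c j ⟨t - j, by omega⟩ = w t := by
  simp [shingleAt, Nat.add_sub_cancel' hjt]

def blockShingles (m : ℕ) (w : Fin n → F) : Fin m → Fin c → F :=
  fun k => shingleAt w c (min (k * c) (n - c))

theorem blockShingles_injective {m : ℕ} (hnm : n ≤ m * c) :
    Function.Injective (blockShingles m : (Fin n → F) → Fin m → Fin c → F) := by
  intro w w' h
  funext t
  have hc : 0 < c := Nat.pos_of_ne_zero fun hc => by have := t.2; simp [hc] at hnm; omega
  have hk : t / c < m := Nat.div_lt_of_lt_mul (by rw [mul_comm]; omega)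
  have hdiv := Nat.div_add_mod' t c
  have hmod := Nat.mod_lt t hc
  set j := min (t / c * c) (n - c)
  rw [← shingleAt_sub w t (c := c) (j := j) (by omega) (by omega),
    ← shingleAt_sub w' t (c := c) (j := j) (by omega) (by omega)]
  exact congrFun (congrFun h ⟨t / c, hk⟩) _

variable [DecidableEq F]

theorem card_shingling_le (w : Fin n → F) : #(shingling c w) ≤ n - c + 1 :=
  card_image_le.trans (card_range _).le

theorem shingleAt_mem_shingling (w : Fin n → F) {j : ℕ} (hj : j ≤ n - c) :
    shingleAt w c j ∈ shingling c w :=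
  mem_image_of_mem _ (mem_range.2 (by omega))

theorem card_fiber_shingling_le [Fintype F] {m : ℕ} (hnm : n ≤ m * c)
    (v : Finset (Fin c → F)) :
    #(univ.filter fun w : Fin n → F => shingling c w = v) ≤ (n - c + 1) ^ m := by
  rcases (univ.filter fun w : Fin n → F => shingling c w = v).eq_empty_or_nonempty with
    hempty | ⟨w₀, hw₀⟩
  · simp [hempty]
  have hv : #v ≤ n - c + 1 := (mem_filter.1 hw₀).2 ▸ card_shingling_le w₀
  calc #(univ.filter fun w : Fin n → F => shingling c w = v)
      ≤ #(Fintype.piFinset fun _ : Fin m => v) := by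
        refine card_le_card_of_injOn (blockShingles m) (fun w hw => ?_)
          (blockShingles_injective hnm).injOn
        rw [coe_filter, Set.mem_ofPred_eq] at hw
        exact Fintype.mem_piFinset.2 fun k => hw.2 ▸ shingleAt_mem_shingling w (min_le_right _ _)
    _ = #v ^ m := by simp
    _ ≤ (n - c + 1) ^ m := Nat.pow_le_pow_left hv m

end Fibers

theorem le_natCeil_div_mul {n c : ℕ} (hc : 0 < c) : n ≤ ⌈(n : ℝ) / c⌉₊ * c := by
  have h := Nat.le_ceil ((n : ℝ) / c)
  rw [div_le_iff₀ (by exact_mod_cast hc)] at h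
  exact_mod_cast h

theorem ceil_mul_logb_eq {n c : ℕ} (hcn : c ≤ n) :
    (⌈(n : ℝ) / c⌉ : ℝ) * Real.logb 2 ((n : ℝ) - c + 1) =
      Real.logb 2 (((n - c + 1) ^ ⌈(n : ℝ) / c⌉₊ : ℕ) : ℝ) := by
  rw [← Int.natCast_ceil_eq_ceil (by positivity), Nat.cast_pow, Real.logb_pow, Nat.cast_add,
    Nat.cast_sub hcn]
  push_cast
  rfl

/-- `c`-shingling `SH_c` is an average-case
`(t₁, (2c−1)·t₁, m₁, m₁ − ⌈n/c⌉·log₂(n−c+1))`-biometric embedding of `Edit_F(n)` into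
`SDif(F^c)`. -/
theorem shingling_biometric_embedding {F : Type} [Fintype F] [Inhabited F] [DecidableEq F]
    (n c : ℕ) (hc1 : 1 ≤ c) (hcn : c ≤ n) (t₁ : ℕ) (m₁ : ℝ) :
    -- (i) distances are preserved up to (2c−1)·t₁
    (∀ w w' : Fin n → F, EditLe t₁ (List.ofFn w) (List.ofFn w') →
      (symmDiff (shingling c w) (shingling c w')).card ≤ (2 * c - 1) * t₁) ∧
    -- (ii) min-entropy decreases by at most ⌈n/c⌉·log₂(n−c+1)
    (∀ W : (Fin n → F) → ℝ, IsDist W → m₁ ≤ minEntropy W →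
      m₁ - (⌈(n : ℝ) / (c : ℝ)⌉ : ℝ) * Real.logb 2 ((n : ℝ) - (c : ℝ) + 1)
        ≤ minEntropy (fun v : Finset (Fin c → F) =>
            ∑ w ∈ Finset.univ.filter fun w => shingling c w = v, W w)) ∧
    -- and the same for average min-entropy given any auxiliary random variable I
    (∀ (ι : Type) [Fintype ι] (p : (Fin n → F) × ι → ℝ),
      IsDist p → m₁ ≤ avgMinEntropy p →
      m₁ - (⌈(n : ℝ) / (c : ℝ)⌉ : ℝ) * Real.logb 2 ((n : ℝ) - (c : ℝ) + 1)
        ≤ avgMinEntropy (fun x : Finset (Fin c → F) × ι =>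
            ∑ w ∈ Finset.univ.filter fun w => shingling c w = x.1, p (w, x.2))) := by
  have hfiber := card_fiber_shingling_le (F := F) (le_natCeil_div_mul (n := n) hc1)
  refine ⟨fun w w' => card_symmDiff_shingling_le_of_editLe hcn, fun W hW hm => ?_,
    fun ι _ p hp hm => ?_⟩
  · have := minEntropy_sub_logb_le_map hW hfiber
    rw [ceil_mul_logb_eq hcn]
    exact (sub_le_sub_right hm _).trans this
  · have := avgMinEntropy_sub_logb_le_mapDist hp hfiber
    rw [ceil_mul_logb_eq hcn]
    exact (sub_le_sub_right hm _).trans this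
end
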